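/- arXiv:math-ph/0701044 — 5 statements merged into one kernel-verified Lean document; each statement's English description precedes it below -/
import Mathlib

section
/- Let α₁, α₂, λ ∈ ℝ and let x : ℤ×ℤ → ℝ be such that at a given square the four differences x_{n,m}−x_{n+1,m}, x_{n,m+1}−x_{n+1,m+1}, x_{n,m}−x_{n,m+1}, x_{n+1,m}−x_{n+1,m+1} are all nonzero. Define the 2×2 real matrices L_{n,m}(λ) with rows (1, x_{n,m}−x_{n+1,m}) and (λα₁(x_{n,m}−x_{n+1,m})⁻¹, 1), and M_{n,m}(λ) with rows (1, x_{n,m}−x_{n,m+1}) and (λα₂(x_{n,m}−x_{n,m+1})⁻¹, 1). Then the discrete Lax equation L_{n,m+1}(λ)·M_{n,m}(λ) = M_{n+1,m}(λ)·L_{n,m}(λ) holds for all λ ∈ ℝ if and only if Q(x_{n,m}, x_{n+1,m}, x_{n,m+1}, x_{n+1,m+1}) = 0. -/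
/-!
Clearing denominators entry by entry, `L_{n,m+1} M_{n,m} − M_{n+1,m} L_{n,m}` equals `λ Q` times a
matrix that does not depend on `λ, α₁, α₂` and whose `(0,0)` entry is nonzero; so the Lax
equation holds for all `λ` (or already for `λ = 1`) exactly when `Q = 0`.
-/

/-- The lattice Schwarzian KdV quad polynomial
`Q(a,b,c,d) = α₁ (a−c)(b−d) − α₂ (a−b)(c−d)`. -/
noncomputable def lSKdV_Q (α₁ α₂ a b c d : ℝ) : ℝ :=
  α₁ * (a - c) * (b - d) - α₂ * (a - b) * (c - d)

/-- The Lax matrix with rows `(1, p − q)` and `(λ α (p − q)⁻¹, 1)`; the matrix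
`L_{n,m}(λ)` is obtained for `α = α₁`, `p = x_{n,m}`, `q = x_{n+1,m}` and the matrix
`M_{n,m}(λ)` for `α = α₂`, `p = x_{n,m}`, `q = x_{n,m+1}`. -/
noncomputable def laxMat (α lam p q : ℝ) : Matrix (Fin 2) (Fin 2) ℝ :=
  !![1, p - q; lam * α * (p - q)⁻¹, 1]

noncomputable def laxDefectFactor (a b c d : ℝ) : Matrix (Fin 2) (Fin 2) ℝ :=
  !![-((a - b) * (a - c))⁻¹, 0;
    (a - b - c + d) / ((a - b) * (a - c) * (b - d) * (c - d)), ((b - d) * (c - d))⁻¹]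

theorem laxDefectFactor_ne_zero {a b c d : ℝ} (hab : a - b ≠ 0) (hac : a - c ≠ 0) :
    laxDefectFactor a b c d ≠ 0 :=
  fun h => by simpa [laxDefectFactor, hab, hac] using congrFun (congrFun h 0) 0

theorem laxMat_mul_sub_laxMat_mul {α₁ α₂ a b c d : ℝ} (lam : ℝ)
    (hab : a - b ≠ 0) (hcd : c - d ≠ 0) (hac : a - c ≠ 0) (hbd : b - d ≠ 0) :
    laxMat α₁ lam c d * laxMat α₂ lam a c - laxMat α₂ lam b d * laxMat α₁ lam a b =
      (lam * lSKdV_Q α₁ α₂ a b c d) • laxDefectFactor a b c d := by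
  ext i j
  fin_cases i <;> fin_cases j <;>
    simp [laxMat, lSKdV_Q, laxDefectFactor] <;> field_simp <;> ring

theorem laxMat_compatible_iff_lSKdV_Q_eq_zero {α₁ α₂ a b c d : ℝ}
    (hab : a - b ≠ 0) (hcd : c - d ≠ 0) (hac : a - c ≠ 0) (hbd : b - d ≠ 0) :
    (∀ lam : ℝ, laxMat α₁ lam c d * laxMat α₂ lam a c = laxMat α₂ lam b d * laxMat α₁ lam a b) ↔
      lSKdV_Q α₁ α₂ a b c d = 0 := by
  simp_rw [← sub_eq_zero (a := laxMat α₁ _ c d * _), laxMat_mul_sub_laxMat_mul _ hab hcd hac hbd,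
    smul_eq_zero, laxDefectFactor_ne_zero hab hac, or_false, mul_eq_zero]
  exact ⟨fun h => (h 1).resolve_left one_ne_zero, fun h _ => Or.inr h⟩

/-- at a square with all four edge differences nonzero, the discrete Lax
equation `L_{n,m+1}(λ) M_{n,m}(λ) = M_{n+1,m}(λ) L_{n,m}(λ)` holds for all `λ ∈ ℝ`
iff `Q(x_{n,m}, x_{n+1,m}, x_{n,m+1}, x_{n+1,m+1}) = 0`. -/
theorem lax_compatibility_iff_lSKdV (α₁ α₂ : ℝ) (x : ℤ × ℤ → ℝ) (n m : ℤ)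
    (h1 : x (n, m) - x (n + 1, m) ≠ 0)
    (h2 : x (n, m + 1) - x (n + 1, m + 1) ≠ 0)
    (h3 : x (n, m) - x (n, m + 1) ≠ 0)
    (h4 : x (n + 1, m) - x (n + 1, m + 1) ≠ 0) :
    (∀ lam : ℝ,
        laxMat α₁ lam (x (n, m + 1)) (x (n + 1, m + 1)) *
            laxMat α₂ lam (x (n, m)) (x (n, m + 1)) =
          laxMat α₂ lam (x (n + 1, m)) (x (n + 1, m + 1)) *
            laxMat α₁ lam (x (n, m)) (x (n + 1, m))) ↔
      lSKdV_Q α₁ α₂ (x (n, m)) (x (n + 1, m)) (x (n, m + 1)) (x (n + 1, m + 1)) = 0 :=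
  laxMat_compatible_iff_lSKdV_Q_eq_zero h1 h2 h3 h4
end

section
/- Let α₁, α₂ ∈ ℝ and c₀, c₁, c₂ ∈ ℝ, and define Φ(x) := c₀ + c₁x + c₂x². Then for all a, b, c, d ∈ ℝ with Q(a,b,c,d) = 0, the Lie point symmetry determining equation Φ(a)·∂₁Q(a,b,c,d) + Φ(b)·∂₂Q(a,b,c,d) + Φ(c)·∂₃Q(a,b,c,d) + Φ(d)·∂₄Q(a,b,c,d) = 0 holds, where ∂ᵢQ denotes the partial derivative of the polynomial Q with respect to its i-th argument. In particular, the vector fields with characteristics 1, x_{n,m} and x_{n,m}² are Lie point symmetries of the lSKdV equation. -/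
theorem deriv_eq_of_forall_eq_mul_add {f : ℝ → ℝ} (k m : ℝ) (hf : ∀ t, f t = k * t + m)
    (x : ℝ) : deriv f x = k := by
  rw [funext hf, (((hasDerivAt_id' x).const_mul k).add_const m).deriv, mul_one]

section partials

variable (α₁ α₂ a b c d : ℝ)

theorem deriv_lSKdV_Q_first :
    deriv (fun t => lSKdV_Q α₁ α₂ t b c d) a = α₁ * (b - d) - α₂ * (c - d) :=
  deriv_eq_of_forall_eq_mul_add _ (α₂ * b * (c - d) - α₁ * c * (b - d))
    (fun t => by unfold lSKdV_Q; ring) a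

theorem deriv_lSKdV_Q_second :
    deriv (fun t => lSKdV_Q α₁ α₂ a t c d) b = α₁ * (a - c) + α₂ * (c - d) :=
  deriv_eq_of_forall_eq_mul_add _ (-(α₁ * (a - c) * d) - α₂ * a * (c - d))
    (fun t => by unfold lSKdV_Q; ring) b

theorem deriv_lSKdV_Q_third :
    deriv (fun t => lSKdV_Q α₁ α₂ a b t d) c = -(α₁ * (b - d)) - α₂ * (a - b) :=
  deriv_eq_of_forall_eq_mul_add _ (α₁ * a * (b - d) + α₂ * (a - b) * d)
    (fun t => by unfold lSKdV_Q; ring) c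

theorem deriv_lSKdV_Q_fourth :
    deriv (fun t => lSKdV_Q α₁ α₂ a b c t) d = α₂ * (a - b) - α₁ * (a - c) :=
  deriv_eq_of_forall_eq_mul_add _ (α₁ * (a - c) * b - α₂ * (a - b) * c)
    (fun t => by unfold lSKdV_Q; ring) d

end partials

theorem lSKdV_Q_quadratic_characteristic (α₁ α₂ c₀ c₁ c₂ a b c d : ℝ) :
    (c₀ + c₁ * a + c₂ * a ^ 2) * deriv (fun t => lSKdV_Q α₁ α₂ t b c d) a +
        (c₀ + c₁ * b + c₂ * b ^ 2) * deriv (fun t => lSKdV_Q α₁ α₂ a t c d) b +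
        (c₀ + c₁ * c + c₂ * c ^ 2) * deriv (fun t => lSKdV_Q α₁ α₂ a b t d) c +
        (c₀ + c₁ * d + c₂ * d ^ 2) * deriv (fun t => lSKdV_Q α₁ α₂ a b c t) d =
      (2 * c₁ + c₂ * (a + b + c + d)) * lSKdV_Q α₁ α₂ a b c d := by
  rw [deriv_lSKdV_Q_first, deriv_lSKdV_Q_second, deriv_lSKdV_Q_third, deriv_lSKdV_Q_fourth, lSKdV_Q]
  ring

/-- for `Φ(x) := c₀ + c₁ x + c₂ x²`, whenever `Q(a,b,c,d) = 0` the Lie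
point symmetry determining equation
`Φ(a) ∂₁Q + Φ(b) ∂₂Q + Φ(c) ∂₃Q + Φ(d) ∂₄Q = 0` holds; in particular the
characteristics `1`, `x_{n,m}`, `x_{n,m}²` are Lie point symmetries of lSKdV. -/
theorem lSKdV_point_symmetries (α₁ α₂ c₀ c₁ c₂ : ℝ) (a b c d : ℝ)
    (hQ : lSKdV_Q α₁ α₂ a b c d = 0) :
    (c₀ + c₁ * a + c₂ * a ^ 2) * deriv (fun t => lSKdV_Q α₁ α₂ t b c d) a +
        (c₀ + c₁ * b + c₂ * b ^ 2) * deriv (fun t => lSKdV_Q α₁ α₂ a t c d) b +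
        (c₀ + c₁ * c + c₂ * c ^ 2) * deriv (fun t => lSKdV_Q α₁ α₂ a b t d) c +
        (c₀ + c₁ * d + c₂ * d ^ 2) * deriv (fun t => lSKdV_Q α₁ α₂ a b c t) d = 0 := by
  rw [lSKdV_Q_quadratic_characteristic, hQ, mul_zero]
end

section
/- Let α₁, α₂ ∈ ℝ with α₁ ≠ α₂, α₁ ≠ 0 and α₂ ≠ 0. Suppose that for each (n,m) ∈ ℤ², Φ_{n,m} : ℝ → ℝ is a polynomial function, and suppose that for every (n,m) ∈ ℤ² and every (a,b,c) ∈ ℝ³ with α₂(a−b) − α₁(a−c) ≠ 0, letting d be the unique real number with Q(a,b,c,d) = 0, the determining equation Φ_{n,m}(a)·∂₁Q(a,b,c,d) + Φ_{n+1,m}(b)·∂₂Q(a,b,c,d) + Φ_{n,m+1}(c)·∂₃Q(a,b,c,d) + Φ_{n+1,m+1}(d)·∂₄Q(a,b,c,d) = 0 holds. Then there exist constants c₀, c₁, c₂ ∈ ℝ, independent of n and m, such that Φ_{n,m}(x) = c₀ + c₁x + c₂x² for all (n,m) ∈ ℤ² and all x ∈ ℝ. Hence the Lie point symmetry algebra of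 the lSKdV equation is spanned by the characteristics 1, x, x² and is isomorphic to sl(2). -/
open Polynomial

theorem Function.Periodic.apply_eq_apply_zero {β : Type*} {f : ℤ → β} (h : Periodic f 1)
    (n : ℤ) : f n = f 0 := by
  simpa using (h.int_mul n) 0

theorem Polynomial.natDegree_le_of_natDegree_comp_le {R : Type*} [Semiring R] [NoZeroDivisors R]
    {p q : R[X]} {k : ℕ} (hq : 2 ≤ q.natDegree) (h : (p.comp q).natDegree ≤ p.natDegree + k) :
    p.natDegree ≤ k := by
  rw [natDegree_comp] at h
  nlinarith

def IsLiePointSymmetry (α₁ α₂ : ℝ) (Φ : ℤ → ℤ → ℝ → ℝ) : Prop :=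
  ∀ n m : ℤ, ∀ a b c d : ℝ, α₂ * (a - b) - α₁ * (a - c) ≠ 0 → lSKdV_Q α₁ α₂ a b c d = 0 →
    Φ n m a * deriv (fun t => lSKdV_Q α₁ α₂ t b c d) a +
      Φ (n + 1) m b * deriv (fun t => lSKdV_Q α₁ α₂ a t c d) b +
      Φ n (m + 1) c * deriv (fun t => lSKdV_Q α₁ α₂ a b t d) c +
      Φ (n + 1) (m + 1) d * deriv (fun t => lSKdV_Q α₁ α₂ a b c t) d = 0

namespace IsLiePointSymmetry

variable {α₁ α₂ : ℝ} {Φ : ℤ → ℤ → ℝ → ℝ}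

theorem determining_eq (h : IsLiePointSymmetry α₁ α₂ Φ) (n m : ℤ) {a b c d : ℝ}
    (hD : α₂ * (a - b) - α₁ * (a - c) ≠ 0) (hQ : lSKdV_Q α₁ α₂ a b c d = 0) :
    Φ n m a * (α₁ * (b - d) - α₂ * (c - d)) + Φ (n + 1) m b * (α₁ * (a - c) + α₂ * (c - d)) +
      Φ n (m + 1) c * (α₂ * (b - a) - α₁ * (b - d)) +
      Φ (n + 1) (m + 1) d * (α₂ * (a - b) - α₁ * (a - c)) = 0 := by
  have e := h n m a b c d hD hQ
  simp (disch := fun_prop) only [lSKdV_Q, deriv_fun_sub, deriv_fun_mul, deriv_const', deriv_id'',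
    deriv_const_sub_id'] at e
  linear_combination e

theorem shift_eq (hne : α₁ ≠ α₂) (h1 : α₁ ≠ 0) (h2 : α₂ ≠ 0) (h : IsLiePointSymmetry α₁ α₂ Φ)
    (n m : ℤ) (x : ℝ) : Φ (n + 1) m x = Φ n m x ∧ Φ n (m + 1) x = Φ n m x := by
  have e₁ := h.determining_eq n m (a := x + 1) (b := x) (c := x) (d := x)
    (by ring_nf; exact sub_ne_zero.2 hne.symm) (by simp only [lSKdV_Q]; ring)
  have e₂ := h.determining_eq n m (a := x) (b := x) (c := x + 1) (d := x)
    (by ring_nf; exact h1) (by simp only [lSKdV_Q]; ring)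
  have e₃ := h.determining_eq n m (a := x) (b := x + 1) (c := x) (d := x)
    (by ring_nf; exact neg_ne_zero.2 h2) (by simp only [lSKdV_Q]; ring)
  have hdiag : Φ (n + 1) (m + 1) x = Φ n m x := by
    have : 2 * α₁ * α₂ * (Φ (n + 1) (m + 1) x - Φ n m x) = 0 := by
      linear_combination α₁ * e₂ - α₂ * e₃ - (α₂ - α₁) * e₁
    simpa [h1, h2, sub_eq_zero] using this
  have hα : α₂ - α₁ ≠ 0 := sub_ne_zero.2 hne.symm
  exact ⟨mul_left_cancel₀ hα (by linear_combination e₂ - α₁ * hdiag),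
    mul_left_cancel₀ hα (by linear_combination e₃ + α₂ * hdiag)⟩

theorem eq_zero_zero (hne : α₁ ≠ α₂) (h1 : α₁ ≠ 0) (h2 : α₂ ≠ 0)
    (h : IsLiePointSymmetry α₁ α₂ Φ) (n m : ℤ) : Φ n m = Φ 0 0 := by
  funext x
  calc Φ n m x = Φ 0 m x :=
        Function.Periodic.apply_eq_apply_zero (f := (Φ · m x))
          (fun k => (h.shift_eq hne h1 h2 k m x).1) n
    _ = Φ 0 0 x :=
        Function.Periodic.apply_eq_apply_zero (f := (Φ 0 · x))
          (fun k => (h.shift_eq hne h1 h2 0 k x).2) m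

theorem natDegree_le_two (hne : α₁ ≠ α₂) (h1 : α₁ ≠ 0) (h2 : α₂ ≠ 0) {p : ℝ[X]}
    (h : IsLiePointSymmetry α₁ α₂ fun _ _ => p.eval) : p.natDegree ≤ 2 := by
  -- `T` makes `∂₄Q = α₁ T(s) - α₂ s = 1` at `(0, s, T(s), d)`, and then `Q = 0` forces `d = E(s)`.
  set T : ℝ[X] := C α₁⁻¹ * (1 + C α₂ * X) with hT
  set E : ℝ[X] := C (α₁ - α₂) * X * T with hE
  have hcomp : p.comp E = -(C (p.eval 0) * (C α₁ * (X - E) - C α₂ * (T - E)) +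
      p * (C α₂ * (T - E) - C α₁ * T) + p.comp T * (C α₂ * X - C α₁ * (X - E))) := by
    refine Polynomial.funext fun s => ?_
    have ht : α₁ * T.eval s = 1 + α₂ * s := by
      simp only [T, eval_mul, eval_C, eval_add, eval_one, eval_X]
      field_simp
    have hD : α₂ * (0 - s) - α₁ * (0 - T.eval s) = 1 := by linear_combination ht
    have hEs : E.eval s = (α₁ - α₂) * s * T.eval s := by simp [E]
    have hQ : lSKdV_Q α₁ α₂ 0 s (T.eval s) (E.eval s) = 0 := by
      rw [lSKdV_Q, hEs]
      linear_combination (α₁ - α₂) * s * T.eval s * ht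
    have e := h.determining_eq 0 0 (hD ▸ one_ne_zero) hQ
    simp only [eval_neg, eval_add, eval_mul, eval_sub, eval_C, eval_X, eval_comp] at e ⊢
    linear_combination e - eval (E.eval s) p * hD
  have hEdeg : E.natDegree = 2 := by
    rw [hE, hT]
    compute_degree!
    exact ⟨sub_ne_zero.2 hne, h1, h2⟩
  refine natDegree_le_of_natDegree_comp_le hEdeg.ge ?_
  have hTdeg : T.natDegree ≤ 1 := by rw [hT]; compute_degree
  have hpTdeg : (p.comp T).natDegree ≤ p.natDegree :=
    natDegree_comp_le.trans (by simpa using Nat.mul_le_mul_left p.natDegree hTdeg)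
  rw [hcomp, hE]
  compute_degree
  omega

end IsLiePointSymmetry

/-- if `α₁ ≠ α₂`, `α₁ ≠ 0`, `α₂ ≠ 0`, and polynomial characteristics
`Φ_{n,m}` satisfy the Lie point symmetry determining equation on the solution set of
`Q = 0` (with `d` the unique solution of `Q(a,b,c,d) = 0` whenever
`α₂(a−b) − α₁(a−c) ≠ 0`), then `Φ_{n,m}(x) = c₀ + c₁ x + c₂ x²` for constants
`c₀, c₁, c₂` independent of `n` and `m`: the Lie point symmetry algebra is spanned
by the characteristics `1, x, x²` (and so is isomorphic to `sl(2)`). -/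
theorem lSKdV_point_symmetry_classification (α₁ α₂ : ℝ)
    (hne : α₁ ≠ α₂) (h1 : α₁ ≠ 0) (h2 : α₂ ≠ 0)
    (Φ : ℤ → ℤ → ℝ → ℝ)
    (hpoly : ∀ n m : ℤ, ∃ p : Polynomial ℝ, ∀ x : ℝ, Φ n m x = p.eval x)
    (hdet : ∀ n m : ℤ, ∀ a b c d : ℝ,
      α₂ * (a - b) - α₁ * (a - c) ≠ 0 →
      lSKdV_Q α₁ α₂ a b c d = 0 →
      Φ n m a * deriv (fun t => lSKdV_Q α₁ α₂ t b c d) a +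
          Φ (n + 1) m b * deriv (fun t => lSKdV_Q α₁ α₂ a t c d) b +
          Φ n (m + 1) c * deriv (fun t => lSKdV_Q α₁ α₂ a b t d) c +
          Φ (n + 1) (m + 1) d * deriv (fun t => lSKdV_Q α₁ α₂ a b c t) d = 0) :
    ∃ c₀ c₁ c₂ : ℝ, ∀ n m : ℤ, ∀ x : ℝ, Φ n m x = c₀ + c₁ * x + c₂ * x ^ 2 := by
  have hΦ : IsLiePointSymmetry α₁ α₂ Φ := hdet
  obtain ⟨p, hp⟩ := hpoly 0 0
  obtain rfl : Φ = fun _ _ => p.eval :=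
    funext₂ fun n m => (hΦ.eq_zero_zero hne h1 h2 n m).trans (funext hp)
  have hdeg := hΦ.natDegree_le_two hne h1 h2
  refine ⟨p.coeff 0, p.coeff 1, p.coeff 2, fun _ _ x => ?_⟩
  conv_lhs => rw [eq_quadratic_of_degree_le_two (natDegree_le_iff_degree_le.mp hdeg)]
  simp only [eval_add, eval_mul, eval_C, eval_pow, eval_X]
  ring
end

section
/- Let α₀ ∈ ℝ. There exists a nonzero constant κ ∈ ℝ such that the following holds. Let u : ℤ → (ℝ → ℝ) be a family of differentiable functions t ↦ u_n(t) satisfying for all n and t: u_{n+1}(t) − u_{n−1}(t) + 2α₀ ≠ 0, u_{n+2}(t) − u_n(t) + 2α₀ ≠ 0, and the differential-difference equation du_n/dt = 4(u_n − u_{n−1} + α₀)(u_n − u_{n+1} − α₀)/(u_{n+1} − u_{n−1} + 2α₀). Define a_n(t) := 4(u_{n+1} − u_n + α₀)² / ((u_{n+2} − u_n + 2α₀)(u_{n+1} − u_{n−1} + 2α₀)). Then a_n satisfies the Volterra equation da_n/dt = κ·a_n·(a_{n+1} − a_{n−1}) for all n and t. -/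
/-- The Miura transformation
`a_n(t) := 4 (u_{n+1} − u_n + α₀)² / ((u_{n+2} − u_n + 2α₀)(u_{n+1} − u_{n−1} + 2α₀))`. -/
noncomputable def miura (α₀ : ℝ) (u : ℤ → ℝ → ℝ) (n : ℤ) (t : ℝ) : ℝ :=
  4 * (u (n + 1) t - u n t + α₀) ^ 2 /
    ((u (n + 2) t - u n t + 2 * α₀) * (u (n + 1) t - u (n - 1) t + 2 * α₀))

/-!
In the shifted differences `p_k := u_k − u_{k−1} + α₀` the lattice equation reads
`du_k/dt = −F(p_k, p_{k+1})` with `F x y := 4xy/(x+y)`, so the `p_k` obey the conservation law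
`dp_k/dt = F(p_{k−1}, p_k) − F(p_k, p_{k+1})`, and the Miura transformation becomes
`a_n = M(p_n, p_{n+1}, p_{n+2})` with `M q r s := 4r²/((r+s)(q+r))`. Differentiating `M` by the
quotient rule and substituting the conservation law gives, after clearing denominators, a
polynomial identity in five consecutive `p_k`, which is the Volterra equation with `κ = −1`.
-/

namespace Miura

noncomputable def flux (x y : ℝ) : ℝ := 4 * x * y / (x + y)

noncomputable def volterraMap (q r s : ℝ) : ℝ := 4 * r ^ 2 / ((r + s) * (q + r))

theorem hasDerivAt_volterraMap {q r s : ℝ → ℝ} {q' r' s' t : ℝ} (hq : HasDerivAt q q' t)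
    (hr : HasDerivAt r r' t) (hs : HasDerivAt s s' t) (hrs : r t + s t ≠ 0)
    (hqr : q t + r t ≠ 0) :
    HasDerivAt (fun τ ↦ volterraMap (q τ) (r τ) (s τ))
      ((8 * r t * r' * ((r t + s t) * (q t + r t)) -
          4 * r t ^ 2 * ((r' + s') * (q t + r t) + (r t + s t) * (q' + r'))) /
        ((r t + s t) * (q t + r t)) ^ 2) t := by
  refine (((hr.fun_pow 2).const_mul 4).fun_div ((hr.fun_add hs).fun_mul (hq.fun_add hr))
    (mul_ne_zero hrs hqr)).congr_deriv ?_
  push_cast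
  ring

theorem volterraMap_flux_identity {p q r s w : ℝ} (hpq : p + q ≠ 0) (hqr : q + r ≠ 0)
    (hrs : r + s ≠ 0) (hsw : s + w ≠ 0) :
    (8 * r * (flux q r - flux r s) * ((r + s) * (q + r)) -
        4 * r ^ 2 * ((flux q r - flux s w) * (q + r) + (r + s) * (flux p q - flux r s))) /
      ((r + s) * (q + r)) ^ 2 =
    -(volterraMap q r s * (volterraMap r s w - volterraMap p q r)) := by
  unfold flux volterraMap
  field_simp
  ring

noncomputable def volterraField (p : ℤ → ℝ → ℝ) (n : ℤ) (t : ℝ) : ℝ :=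
  volterraMap (p n t) (p (n + 1) t) (p (n + 2) t)

theorem hasDerivAt_volterraField {p : ℤ → ℝ → ℝ}
    (hp : ∀ k t, HasDerivAt (p k) (flux (p (k - 1) t) (p k t) - flux (p k t) (p (k + 1) t)) t)
    (hne : ∀ k t, p k t + p (k + 1) t ≠ 0) (n : ℤ) (t : ℝ) :
    HasDerivAt (volterraField p n)
      (-(volterraField p n t * (volterraField p (n + 1) t - volterraField p (n - 1) t))) t := by
  have h₀ := hp n t
  have h₁ := hp (n + 1) t
  have h₂ := hp (n + 2) t
  have hnePrev := hne (n - 1) t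
  have hne₀ := hne n t
  have hne₁ := hne (n + 1) t
  have hne₂ := hne (n + 2) t
  simp only [volterraField, add_sub_cancel_right, sub_add_cancel, show n + 1 + 1 = n + 2 by ring,
    show n + 2 - 1 = n + 1 by ring, show n + 2 + 1 = n + 3 by ring,
    show n + 1 + 2 = n + 3 by ring, show n - 1 + 2 = n + 1 by ring] at *
  rw [← volterraMap_flux_identity hnePrev hne₀ hne₁ hne₂]
  exact (hasDerivAt_volterraMap h₀ h₁ h₂ hne₁ hne₀).congr_deriv (by ring)

def shiftedDiff (α₀ : ℝ) (u : ℤ → ℝ → ℝ) (k : ℤ) (t : ℝ) : ℝ := u k t - u (k - 1) t + α₀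

theorem shiftedDiff_add_shiftedDiff_succ (α₀ : ℝ) (u : ℤ → ℝ → ℝ) (k : ℤ) (t : ℝ) :
    shiftedDiff α₀ u k t + shiftedDiff α₀ u (k + 1) t = u (k + 1) t - u (k - 1) t + 2 * α₀ := by
  simp only [shiftedDiff, add_sub_cancel_right]
  ring

theorem miura_eq_volterraField (α₀ : ℝ) (u : ℤ → ℝ → ℝ) :
    miura α₀ u = volterraField (shiftedDiff α₀ u) := by
  ext n t
  have hsum := shiftedDiff_add_shiftedDiff_succ α₀ u (n + 1) t
  rw [add_sub_cancel_right, show n + 1 + 1 = n + 2 by ring] at hsum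
  rw [miura, volterraField, volterraMap, hsum, shiftedDiff_add_shiftedDiff_succ, shiftedDiff,
    add_sub_cancel_right]

theorem hasDerivAt_shiftedDiff {α₀ : ℝ} {u : ℤ → ℝ → ℝ} (hu : ∀ k, Differentiable ℝ (u k))
    (hflow : ∀ k t, deriv (u k) t =
      4 * (u k t - u (k - 1) t + α₀) * (u k t - u (k + 1) t - α₀) /
        (u (k + 1) t - u (k - 1) t + 2 * α₀)) (k : ℤ) (t : ℝ) :
    HasDerivAt (shiftedDiff α₀ u k)
      (flux (shiftedDiff α₀ u (k - 1) t) (shiftedDiff α₀ u k t) -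
        flux (shiftedDiff α₀ u k t) (shiftedDiff α₀ u (k + 1) t)) t := by
  have hflux :
      ∀ j, deriv (u j) t = -flux (shiftedDiff α₀ u j t) (shiftedDiff α₀ u (j + 1) t) := by
    intro j
    rw [hflow, flux, shiftedDiff_add_shiftedDiff_succ]
    simp only [shiftedDiff, add_sub_cancel_right]
    ring
  have h := (((hu k t).hasDerivAt.sub (hu (k - 1) t).hasDerivAt).add_const α₀)
  rw [hflux, hflux, sub_add_cancel] at h
  exact h.congr_deriv (by ring)

end Miura

/-- there is a nonzero constant `κ` such that for every differentiable
family `u_n(t)` with nonvanishing denominators satisfying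
`du_n/dt = 4 (u_n − u_{n−1} + α₀)(u_n − u_{n+1} − α₀)/(u_{n+1} − u_{n−1} + 2α₀)`,
the Miura-transformed field `a_n` satisfies the Volterra equation
`da_n/dt = κ a_n (a_{n+1} − a_{n−1})`. -/
theorem miura_maps_volterra_flow (α₀ : ℝ) :
    ∃ κ : ℝ, κ ≠ 0 ∧
      ∀ u : ℤ → ℝ → ℝ,
        (∀ n : ℤ, Differentiable ℝ (u n)) →
        (∀ (n : ℤ) (t : ℝ), u (n + 1) t - u (n - 1) t + 2 * α₀ ≠ 0) →
        (∀ (n : ℤ) (t : ℝ), u (n + 2) t - u n t + 2 * α₀ ≠ 0) →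
        (∀ (n : ℤ) (t : ℝ),
          deriv (u n) t =
            4 * (u n t - u (n - 1) t + α₀) * (u n t - u (n + 1) t - α₀) /
              (u (n + 1) t - u (n - 1) t + 2 * α₀)) →
        ∀ (n : ℤ) (t : ℝ),
          deriv (miura α₀ u n) t =
            κ * miura α₀ u n t * (miura α₀ u (n + 1) t - miura α₀ u (n - 1) t) := by
  refine ⟨-1, by norm_num, fun u hu hne _ hflow n t ↦ ?_⟩
  have hne' : ∀ k t, Miura.shiftedDiff α₀ u k t + Miura.shiftedDiff α₀ u (k + 1) t ≠ 0 :=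
    fun k t ↦ by rw [Miura.shiftedDiff_add_shiftedDiff_succ]; exact hne k t
  rw [Miura.miura_eq_volterraField, neg_one_mul, neg_mul]
  exact (Miura.hasDerivAt_volterraField (Miura.hasDerivAt_shiftedDiff hu hflow) hne' n t).deriv
end

section
/- Let (α₁,α₂) ↦ q(·,·,·,·;α₁,α₂) be a family of differentiable functions ℝ⁴ → ℝ satisfying the swap antisymmetry q(a,c,b,d;α₂,α₁) = −q(a,b,c,d;α₁,α₂) for all a,b,c,d (as holds for the lSKdV quad polynomial). For each (α₁,α₂) let Z[·;α₁,α₂] and g[·;α₁,α₂] assign to every field u : ℤ×ℤ→ℝ a field ℤ×ℤ→ℝ, and let a(α₁,α₂) be nonzero constants such that: (i) g has the equivariance g[Su;α₂,α₁](m,n) = g[u;α₁,α₂](n,m) for all u and (n,m), where (Su)(n,m) := u(m,n); and (ii) for every pair of parameters and every field u solving q(u_{n,m},u_{n+1,m},u_{n,m+1},u_{n+1,m+1};α₁,α₂) = 0 for all (n,m), the prolongation (pr Z q)[u](n,m) := Σ_{(i,j)∈{0,1}²} Z[u;α₁,α₂](n+i,m+j)·∂_{(i,j)}q(u_{n,m},u_{n+1,m},u_{n,m+1},u_{n+1,m+1};α₁,α₂)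 equals a(α₁,α₂)·g[u;α₁,α₂](n,m), where ∂_{(0,0)},∂_{(1,0)},∂_{(0,1)},∂_{(1,1)} denote the partial derivatives of q in its first through fourth arguments. Define Z*[u;α₁,α₂](n,m) := Z[Su;α₂,α₁](m,n). Then for every field u solving the quad equation with parameters (α₁,α₂): (pr Z* q)[u] = −a(α₂,α₁)·g[u;α₁,α₂], and consequently the combined characteristic W[u] := (1/a(α₁,α₂))·Z[u;α₁,α₂] + (1/a(α₂,α₁))·Z*[u;α₁,α₂] satisfies (pr W q)[u](n,m) = 0 for all (n,m), i.e. W is a generalized symmetry of the quad equation. -/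
/-!
Transposing the lattice, `u ↦ Su`, while exchanging `α₁ ↔ α₂` maps solutions to solutions, since
antisymmetry of `q` only flips the sign of the equation. The same antisymmetry relates each partial
derivative of `q` at `(α₂, α₁)` to minus a partial derivative at `(α₁, α₂)` with the two middle
slots exchanged, which is exactly how `S` permutes the vertices of a quad. Hence
`(pr Z* q)[u](n,m) = -(pr Z q)[Su](m,n) = -a(α₂,α₁) g[Su;α₂,α₁](m,n)`, and the equivariance of `g`
together with the linearity of `pr` in the characteristic gives the rest.
-/

/-- The prolongation of an evolutionary vector field with characteristic values `Zu`
acting on the quad function `q` (with parameters `α₁, α₂`) at the field `u`, at the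
point `(n,m)`:
`(pr Z q)[u](n,m) = Σ_{(i,j)∈{0,1}²} Zu(n+i,m+j) ∂_{(i,j)}q`, the partial derivatives
of `q` in its four arguments being evaluated at the quad
`(u_{n,m}, u_{n+1,m}, u_{n,m+1}, u_{n+1,m+1})`. -/
noncomputable def quadProl (q : ℝ → ℝ → ℝ → ℝ → ℝ → ℝ → ℝ) (α₁ α₂ : ℝ)
    (Zu u : ℤ × ℤ → ℝ) (n m : ℤ) : ℝ :=
  Zu (n, m) *
      deriv (fun t => q α₁ α₂ t (u (n + 1, m)) (u (n, m + 1)) (u (n + 1, m + 1))) (u (n, m)) +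
    Zu (n + 1, m) *
      deriv (fun t => q α₁ α₂ (u (n, m)) t (u (n, m + 1)) (u (n + 1, m + 1))) (u (n + 1, m)) +
    Zu (n, m + 1) *
      deriv (fun t => q α₁ α₂ (u (n, m)) (u (n + 1, m)) t (u (n + 1, m + 1))) (u (n, m + 1)) +
    Zu (n + 1, m + 1) *
      deriv (fun t => q α₁ α₂ (u (n, m)) (u (n + 1, m)) (u (n, m + 1)) t) (u (n + 1, m + 1))

def IsQuadSolution (q : ℝ → ℝ → ℝ → ℝ → ℝ → ℝ → ℝ) (α₁ α₂ : ℝ) (u : ℤ × ℤ → ℝ) : Prop :=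
  ∀ n m : ℤ, q α₁ α₂ (u (n, m)) (u (n + 1, m)) (u (n, m + 1)) (u (n + 1, m + 1)) = 0

section SwapAntisymmetric

variable {q : ℝ → ℝ → ℝ → ℝ → ℝ → ℝ → ℝ} {α₁ α₂ : ℝ}

theorem IsQuadSolution.swap (hanti : ∀ a b c d : ℝ, q α₂ α₁ a c b d = -q α₁ α₂ a b c d)
    {u : ℤ × ℤ → ℝ} (hu : IsQuadSolution q α₁ α₂ u) :
    IsQuadSolution q α₂ α₁ (fun p => u (p.2, p.1)) := fun n m => by
  simpa [hanti] using hu m n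

theorem quadProl_swap (hanti : ∀ a b c d : ℝ, q α₂ α₁ a c b d = -q α₁ α₂ a b c d)
    (Zv u : ℤ × ℤ → ℝ) (n m : ℤ) :
    quadProl q α₁ α₂ (fun p => Zv (p.2, p.1)) u n m =
      -quadProl q α₂ α₁ Zv (fun p => u (p.2, p.1)) m n := by
  simp only [quadProl, hanti, deriv.fun_neg]
  ring

end SwapAntisymmetric

theorem quadProl_linearCombination (q : ℝ → ℝ → ℝ → ℝ → ℝ → ℝ → ℝ) (α₁ α₂ c c' : ℝ)
    (Zu Zu' u : ℤ × ℤ → ℝ) (n m : ℤ) :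
    quadProl q α₁ α₂ (fun p => c * Zu p + c' * Zu' p) u n m =
      c * quadProl q α₁ α₂ Zu u n m + c' * quadProl q α₁ α₂ Zu' u n m := by
  simp only [quadProl]
  ring

theorem swap_combined_generalized_symmetry_general
    (q : ℝ → ℝ → ℝ → ℝ → ℝ → ℝ → ℝ)
    (hanti : ∀ α₁ α₂ a b c d : ℝ, q α₂ α₁ a c b d = -q α₁ α₂ a b c d)
    (Z g : ℝ → ℝ → (ℤ × ℤ → ℝ) → ℤ × ℤ → ℝ)
    (aconst : ℝ → ℝ → ℝ) (ha : ∀ α₁ α₂ : ℝ, aconst α₁ α₂ ≠ 0)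
    (hequiv : ∀ (α₁ α₂ : ℝ) (u : ℤ × ℤ → ℝ) (n m : ℤ),
      g α₂ α₁ (fun p => u (p.2, p.1)) (m, n) = g α₁ α₂ u (n, m))
    (hprZ : ∀ (α₁ α₂ : ℝ) (u : ℤ × ℤ → ℝ),
      (∀ n m : ℤ,
        q α₁ α₂ (u (n, m)) (u (n + 1, m)) (u (n, m + 1)) (u (n + 1, m + 1)) = 0) →
      ∀ n m : ℤ,
        quadProl q α₁ α₂ (Z α₁ α₂ u) u n m = aconst α₁ α₂ * g α₁ α₂ u (n, m)) :
    ∀ (α₁ α₂ : ℝ) (u : ℤ × ℤ → ℝ),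
      (∀ n m : ℤ,
        q α₁ α₂ (u (n, m)) (u (n + 1, m)) (u (n, m + 1)) (u (n + 1, m + 1)) = 0) →
      (∀ n m : ℤ,
        quadProl q α₁ α₂ (fun p => Z α₂ α₁ (fun r => u (r.2, r.1)) (p.2, p.1)) u n m =
          -aconst α₂ α₁ * g α₁ α₂ u (n, m)) ∧
      (∀ n m : ℤ,
        quadProl q α₁ α₂
          (fun p => (1 / aconst α₁ α₂) * Z α₁ α₂ u p +
            (1 / aconst α₂ α₁) * Z α₂ α₁ (fun r => u (r.2, r.1)) (p.2, p.1)) u n m = 0) := by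
  intro α₁ α₂ u hsol
  have hsol_swap : IsQuadSolution q α₂ α₁ (fun p => u (p.2, p.1)) :=
    IsQuadSolution.swap (hanti α₁ α₂) hsol
  have hprZstar : ∀ n m : ℤ,
      quadProl q α₁ α₂ (fun p => Z α₂ α₁ (fun r => u (r.2, r.1)) (p.2, p.1)) u n m =
        -aconst α₂ α₁ * g α₁ α₂ u (n, m) := fun n m => by
    rw [quadProl_swap (hanti α₁ α₂), hprZ α₂ α₁ (fun p => u (p.2, p.1)) hsol_swap, hequiv,
      neg_mul]
  refine ⟨hprZstar, fun n m => ?_⟩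
  rw [quadProl_linearCombination, hprZ α₁ α₂ u hsol, hprZstar]
  field_simp [ha α₁ α₂, ha α₂ α₁]
  ring

/-- for a family of differentiable quad functions `q` with the swap
antisymmetry `q(a,c,b,d;α₂,α₁) = −q(a,b,c,d;α₁,α₂)`, characteristics `Z`,
fields `g` with the swap equivariance `g[Su;α₂,α₁](m,n) = g[u;α₁,α₂](n,m)`, and
nonzero constants `a(α₁,α₂)` such that `(pr Z q)[u] = a(α₁,α₂)·g[u;α₁,α₂]` on
solutions, the swapped characteristic `Z*[u;α₁,α₂](n,m) := Z[Su;α₂,α₁](m,n)`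
satisfies `(pr Z* q)[u] = −a(α₂,α₁)·g[u;α₁,α₂]` on solutions, and hence
`W := (1/a(α₁,α₂))·Z + (1/a(α₂,α₁))·Z*` is a generalized symmetry:
`(pr W q)[u] = 0` on solutions. -/
theorem swap_combined_generalized_symmetry
    (q : ℝ → ℝ → ℝ → ℝ → ℝ → ℝ → ℝ)
    (hdiff : ∀ α₁ α₂ : ℝ,
      Differentiable ℝ (fun p : ℝ × ℝ × ℝ × ℝ => q α₁ α₂ p.1 p.2.1 p.2.2.1 p.2.2.2))
    (hanti : ∀ α₁ α₂ a b c d : ℝ, q α₂ α₁ a c b d = -q α₁ α₂ a b c d)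
    (Z g : ℝ → ℝ → (ℤ × ℤ → ℝ) → ℤ × ℤ → ℝ)
    (aconst : ℝ → ℝ → ℝ) (ha : ∀ α₁ α₂ : ℝ, aconst α₁ α₂ ≠ 0)
    (hequiv : ∀ (α₁ α₂ : ℝ) (u : ℤ × ℤ → ℝ) (n m : ℤ),
      g α₂ α₁ (fun p => u (p.2, p.1)) (m, n) = g α₁ α₂ u (n, m))
    (hprZ : ∀ (α₁ α₂ : ℝ) (u : ℤ × ℤ → ℝ),
      (∀ n m : ℤ,
        q α₁ α₂ (u (n, m)) (u (n + 1, m)) (u (n, m + 1)) (u (n + 1, m + 1)) = 0) →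
      ∀ n m : ℤ,
        quadProl q α₁ α₂ (Z α₁ α₂ u) u n m = aconst α₁ α₂ * g α₁ α₂ u (n, m)) :
    ∀ (α₁ α₂ : ℝ) (u : ℤ × ℤ → ℝ),
      (∀ n m : ℤ,
        q α₁ α₂ (u (n, m)) (u (n + 1, m)) (u (n, m + 1)) (u (n + 1, m + 1)) = 0) →
      (∀ n m : ℤ,
        quadProl q α₁ α₂ (fun p => Z α₂ α₁ (fun r => u (r.2, r.1)) (p.2, p.1)) u n m =
          -aconst α₂ α₁ * g α₁ α₂ u (n, m)) ∧
      (∀ n m : ℤ,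
        quadProl q α₁ α₂
          (fun p => (1 / aconst α₁ α₂) * Z α₁ α₂ u p +
            (1 / aconst α₂ α₁) * Z α₂ α₁ (fun r => u (r.2, r.1)) (p.2, p.1)) u n m = 0) :=
  swap_combined_generalized_symmetry_general q hanti Z g aconst ha hequiv hprZ
end
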